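/- Let X ∈ ℝ^{n×p} be centered with singular value decomposition X = U D Vᵀ, and let Z = U D be the principal component score matrix. Then for the j-th column zⱼ of Z and any λ > 0, the minimizer of β ↦ ‖zⱼ - X β‖₂² + λ‖β‖₂² is β̂ = (XᵀX + λI)⁻¹ Xᵀ zⱼ = (dⱼ²/(dⱼ² + λ)) vⱼ, where dⱼ is the j-th singular value and vⱼ the j-th column of V; hence β̂/‖β̂‖₂ = vⱼ whenever dⱼ > 0. -/

import Mathlib

open Matrix BigOperators

noncomputable def vnormSq {m : ℕ} (v : Fin m → ℝ) : ℝ := ∑ i, v i ^ 2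

noncomputable def vnorm {m : ℕ} (v : Fin m → ℝ) : ℝ := Real.sqrt (vnormSq v)

lemma vnormSq_eq_dot {m : ℕ} (v : Fin m → ℝ) : vnormSq v = v ⬝ᵥ v := by
  simp [vnormSq, dotProduct, sq]

lemma vnormSq_nonneg' {m : ℕ} (v : Fin m → ℝ) : 0 ≤ vnormSq v :=
  Finset.sum_nonneg fun i _ => sq_nonneg _

lemma mulVec_single_one' {a b : ℕ} (M : Matrix (Fin a) (Fin b) ℝ) (j : Fin b) :
    M *ᵥ Pi.single j 1 = fun i => M i j := by
  funext i
  simp [Matrix.mulVec, dotProduct, Pi.single_apply, mul_ite]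

lemma diagMulVecSingle {a : ℕ} (w : Fin a → ℝ) (j : Fin a) :
    Matrix.diagonal w *ᵥ Pi.single j 1 = w j • (Pi.single j 1 : Fin a → ℝ) := by
  funext k
  by_cases hk : k = j <;>
    simp [Matrix.mulVec_diagonal, Pi.single_apply, hk]

/-- Ridge-regression characterization of PCA loadings (Zou et al.): with X = U D Vᵀ and
scores Z = U D, the ridge solution for the j-th score is (dⱼ²/(dⱼ²+λ)) vⱼ, it minimizes the
ridge objective, and its normalization recovers vⱼ when dⱼ > 0. -/
theorem stmt10 {n p r : ℕ} (U : Matrix (Fin n) (Fin r) ℝ) (V : Matrix (Fin p) (Fin r) ℝ)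
    (d : Fin r → ℝ) (hd : ∀ i, 0 ≤ d i)
    (hU : Uᵀ * U = 1) (hV : Vᵀ * V = 1)
    (X : Matrix (Fin n) (Fin p) ℝ) (hX : X = U * Matrix.diagonal d * Vᵀ)
    (j : Fin r) (z : Fin n → ℝ) (hz : z = fun i => (U * Matrix.diagonal d) i j)
    (lam : ℝ) (hlam : 0 < lam)
    (βhat : Fin p → ℝ)
    (hβ : βhat = (Xᵀ * X + lam • (1 : Matrix (Fin p) (Fin p) ℝ))⁻¹ *ᵥ (Xᵀ *ᵥ z)) :
    βhat = (d j ^ 2 / (d j ^ 2 + lam)) • (fun i => V i j) ∧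
      (∀ β : Fin p → ℝ,
        vnormSq (z - X *ᵥ βhat) + lam * vnormSq βhat ≤
          vnormSq (z - X *ᵥ β) + lam * vnormSq β) ∧
      (0 < d j → (vnorm βhat)⁻¹ • βhat = fun i => V i j) := by
  have hpos : 0 < d j ^ 2 + lam := by positivity
  set c : ℝ := d j ^ 2 / (d j ^ 2 + lam) with hc
  set e : Fin r → ℝ := Pi.single j 1 with he
  set v : Fin p → ℝ := fun i => V i j with hv
  have hvVe : v = V *ᵥ e := (mulVec_single_one' V j).symm
  have hzUe : z = (U * Matrix.diagonal d) *ᵥ e := by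
    rw [hz, mulVec_single_one']
  -- Xᵀ and XᵀX
  have hXt : Xᵀ = V * Matrix.diagonal d * Uᵀ := by
    rw [hX]
    simp [Matrix.transpose_mul, Matrix.diagonal_transpose, Matrix.mul_assoc]
  have hXtX : Xᵀ * X = V * Matrix.diagonal (fun i => d i ^ 2) * Vᵀ := by
    rw [hXt, hX]
    have h0 : V * Matrix.diagonal d * Uᵀ * (U * Matrix.diagonal d * Vᵀ)
        = V * (Matrix.diagonal d * ((Uᵀ * U) * (Matrix.diagonal d * Vᵀ))) := by
      simp only [Matrix.mul_assoc]
    rw [h0, hU, Matrix.one_mul, ← Matrix.mul_assoc (Matrix.diagonal d),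
      Matrix.diagonal_mul_diagonal]
    have h1 : (fun i => d i * d i) = fun i => d i ^ 2 := by funext i; ring
    rw [h1]
    simp only [Matrix.mul_assoc]
  -- Xᵀ z = d j ^ 2 • v
  have hXtz : Xᵀ *ᵥ z = (d j ^ 2) • v := by
    have hM : Xᵀ * (U * Matrix.diagonal d) = V * Matrix.diagonal (fun i => d i ^ 2) := by
      rw [hXt]
      have h0 : V * Matrix.diagonal d * Uᵀ * (U * Matrix.diagonal d)
          = V * (Matrix.diagonal d * ((Uᵀ * U) * Matrix.diagonal d)) := by
        simp only [Matrix.mul_assoc]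
      rw [h0, hU, Matrix.one_mul, Matrix.diagonal_mul_diagonal]
      have h1 : (fun i => d i * d i) = fun i => d i ^ 2 := by funext i; ring
      rw [h1]
    rw [hzUe, Matrix.mulVec_mulVec, hM, ← Matrix.mulVec_mulVec, diagMulVecSingle,
      Matrix.mulVec_smul, hvVe]
  -- XᵀX v = d j ^ 2 • v
  have hXtXv : (Xᵀ * X) *ᵥ v = (d j ^ 2) • v := by
    rw [hXtX, hvVe, Matrix.mulVec_mulVec]
    have h0 : V * Matrix.diagonal (fun i => d i ^ 2) * Vᵀ * V
        = V * Matrix.diagonal (fun i => d i ^ 2) * (Vᵀ * V) := by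
      simp only [Matrix.mul_assoc]
    rw [h0, hV, Matrix.mul_one, ← Matrix.mulVec_mulVec, diagMulVecSingle,
      Matrix.mulVec_smul]
  set A : Matrix (Fin p) (Fin p) ℝ := Xᵀ * X + lam • (1 : Matrix (Fin p) (Fin p) ℝ) with hA
  have hAx : ∀ x : Fin p → ℝ, A *ᵥ x = (Xᵀ * X) *ᵥ x + lam • x := by
    intro x
    rw [hA, Matrix.add_mulVec, Matrix.smul_mulVec, Matrix.one_mulVec]
  have hAcv : A *ᵥ (c • v) = (d j ^ 2) • v := by
    rw [Matrix.mulVec_smul, hAx, hXtXv, smul_add, smul_smul, smul_smul, ← add_smul]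
    congr 1
    rw [hc, ← mul_add, div_mul_cancel₀ _ hpos.ne']
  -- A is positive definite, hence invertible
  have hApos : A.PosDef := by
    apply Matrix.PosDef.posSemidef_add
    · have := Matrix.posSemidef_conjTranspose_mul_self X
      simpa [Matrix.conjTranspose_eq_transpose_of_trivial] using this
    · exact Matrix.PosDef.one.smul hlam
  have hAunit : IsUnit A.det := (Matrix.isUnit_iff_isUnit_det A).mp hApos.isUnit
  have hβc : βhat = c • v := by
    rw [hβ, hXtz, ← hAcv, Matrix.mulVec_mulVec, Matrix.nonsing_inv_mul A hAunit,
      Matrix.one_mulVec]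
  refine ⟨hβc, ?_, ?_⟩
  · -- minimality
    intro β
    have hNE : Xᵀ *ᵥ (X *ᵥ βhat) + lam • βhat = Xᵀ *ᵥ z := by
      have h0 := hAcv
      rw [← hβc, hAx] at h0
      rw [Matrix.mulVec_mulVec, h0, hXtz]
    set δ : Fin p → ℝ := β - βhat with hδ
    have hβeq : β = βhat + δ := by rw [hδ]; abel
    have hXβ : X *ᵥ β = X *ᵥ βhat + X *ᵥ δ := by
      rw [hβeq, Matrix.mulVec_add]
    set w : Fin n → ℝ := z - X *ᵥ βhat with hw
    have hzw : z - X *ᵥ β = w - X *ᵥ δ := by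
      rw [hw, hXβ]; abel
    have hcross : w ⬝ᵥ (X *ᵥ δ) = lam * (βhat ⬝ᵥ δ) := by
      have h1 : w ⬝ᵥ (X *ᵥ δ) = (Xᵀ *ᵥ w) ⬝ᵥ δ := by
        rw [Matrix.dotProduct_mulVec, ← Matrix.mulVec_transpose]
      have h2 : Xᵀ *ᵥ w = lam • βhat := by
        rw [hw, Matrix.mulVec_sub, ← hNE]
        funext i; simp
      rw [h1, h2, smul_dotProduct, smul_eq_mul]
    have hexp1 : vnormSq (w - X *ᵥ δ)
        = vnormSq w - 2 * (w ⬝ᵥ (X *ᵥ δ)) + vnormSq (X *ᵥ δ) := by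
      simp only [vnormSq_eq_dot, sub_dotProduct, dotProduct_sub]
      rw [dotProduct_comm (X *ᵥ δ) w]
      ring
    have hexp2 : vnormSq (βhat + δ) = vnormSq βhat + 2 * (βhat ⬝ᵥ δ) + vnormSq δ := by
      simp only [vnormSq_eq_dot, add_dotProduct, dotProduct_add]
      rw [dotProduct_comm δ βhat]
      ring
    rw [hzw, hβeq, hexp1, hexp2, hcross]
    have h3 := vnormSq_nonneg' (X *ᵥ δ)
    have h4 := vnormSq_nonneg' δ
    nlinarith
  · -- normalization
    intro hdj
    have hcpos : 0 < c := by
      rw [hc]; positivity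
    have hvnorm : vnormSq v = 1 := by
      have : (Vᵀ * V) j j = (1 : Matrix (Fin r) (Fin r) ℝ) j j := by rw [hV]
      rw [Matrix.mul_apply, Matrix.one_apply_eq] at this
      simp only [Matrix.transpose_apply] at this
      rw [vnormSq]
      rw [← this]
      congr 1
      funext i
      rw [sq, hv]
    have hnormβ : vnorm βhat = c := by
      rw [vnorm, hβc]
      have : vnormSq (c • v) = c ^ 2 * vnormSq v := by
        simp [vnormSq, Finset.mul_sum, mul_pow]
      rw [this, hvnorm, mul_one, Real.sqrt_sq hcpos.le]
    rw [hnormβ, hβc, smul_smul, inv_mul_cancel₀ hcpos.ne', one_smul]
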